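/- Let H : ℝ → ℝ be the Heaviside function with H(y) = 1 for y > 0 and H(y) = 0 for y ≤ 0. Define y : [0, 2π] → ℝ by y(τ) = (τ/4)·sin τ + ((1/2)cos τ + (−3π/4 + τ/2)·sin τ)·H(τ − 3π/2) + (−(1/2)cos τ + (π/4 − τ/2)·sin τ)·H(τ − π/2). Then y(0) = 0, y'(0) = 0, y is continuously differentiable on [0, 2π], and for every τ ∈ (0, 2π) with τ ∉ {π/2, 3π/2}, y''(τ) + y(τ) = ((1 − H(τ − π/2) + H(τ − 3π/2)) − 1/2)·cos τ. -/

import Mathlib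

open Real Filter Topology

/-- Heaviside function: `H y = 1` for `y > 0`, `H y = 0` for `y ≤ 0`. -/
noncomputable def H (y : ℝ) : ℝ := if 0 < y then 1 else 0

/-- The first-order deformation solution of the homotopy analysis method for
`ẍ + (1 + εH(x))x = 0` is `x¹(τ) = ε·h₁·y(τ)`. -/
noncomputable def y (τ : ℝ) : ℝ :=
  (τ / 4) * Real.sin τ
    + ((1 / 2) * Real.cos τ + (-(3 * π / 4) + τ / 2) * Real.sin τ) * H (τ - 3 * π / 2)
    + (-(1 / 2) * Real.cos τ + (π / 4 - τ / 2) * Real.sin τ) * H (τ - π / 2)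

lemma H_nonpos {t : ℝ} (h : t ≤ 0) : H t = 0 := if_neg (not_lt.2 h)
lemma H_pos {t : ℝ} (h : 0 < t) : H t = 1 := if_pos h
lemma H_abs (t : ℝ) : |H t| ≤ 1 := by unfold H; split <;> norm_num

/-- Derivative of `y`. -/
noncomputable def D (τ : ℝ) : ℝ :=
  ((1 / 4) * Real.sin τ + (τ / 4) * Real.cos τ)
    + ((-(3 * π / 4) + τ / 2) * Real.cos τ) * H (τ - 3 * π / 2)
    + ((π / 4 - τ / 2) * Real.cos τ) * H (τ - π / 2)

lemma hasDerivAt_b (τ : ℝ) :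
    HasDerivAt (fun t : ℝ => (t / 4) * Real.sin t)
      ((1 / 4) * Real.sin τ + (τ / 4) * Real.cos τ) τ := by
  have := ((hasDerivAt_id τ).div_const 4).mul (Real.hasDerivAt_sin τ)
  simp only [id_eq, Pi.mul_def, Pi.add_def] at this
  convert this using 1
  all_goals ring

lemma hasDerivAt_f (τ : ℝ) :
    HasDerivAt (fun t : ℝ => (1 / 2) * Real.cos t + (-(3 * π / 4) + t / 2) * Real.sin t)
      ((-(3 * π / 4) + τ / 2) * Real.cos τ) τ := by
  have := ((Real.hasDerivAt_cos τ).const_mul (1 / 2 : ℝ)).add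
    ((((hasDerivAt_id τ).div_const 2).const_add (-(3 * π / 4))).mul (Real.hasDerivAt_sin τ))
  simp only [id_eq, Pi.mul_def, Pi.add_def] at this
  exact this.congr_deriv (by ring)

lemma hasDerivAt_g (τ : ℝ) :
    HasDerivAt (fun t : ℝ => -(1 / 2) * Real.cos t + (π / 4 - t / 2) * Real.sin t)
      ((π / 4 - τ / 2) * Real.cos τ) τ := by
  have := ((Real.hasDerivAt_cos τ).const_mul (-(1 / 2) : ℝ)).add
    ((((hasDerivAt_id τ).div_const 2).const_sub (π / 4)).mul (Real.hasDerivAt_sin τ))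
  simp only [id_eq, Pi.mul_def, Pi.add_def] at this
  exact this.congr_deriv (by ring)

lemma hasDerivAt_b' (τ : ℝ) :
    HasDerivAt (fun t : ℝ => (1 / 4) * Real.sin t + (t / 4) * Real.cos t)
      ((1 / 2) * Real.cos τ - (τ / 4) * Real.sin τ) τ := by
  have := ((Real.hasDerivAt_sin τ).const_mul (1 / 4 : ℝ)).add
    (((hasDerivAt_id τ).div_const 4).mul (Real.hasDerivAt_cos τ))
  simp only [id_eq, Pi.mul_def, Pi.add_def] at this
  exact this.congr_deriv (by ring)

lemma hasDerivAt_f' (τ : ℝ) :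
    HasDerivAt (fun t : ℝ => (-(3 * π / 4) + t / 2) * Real.cos t)
      ((1 / 2) * Real.cos τ - (-(3 * π / 4) + τ / 2) * Real.sin τ) τ := by
  have := (((hasDerivAt_id τ).div_const 2).const_add (-(3 * π / 4))).mul (Real.hasDerivAt_cos τ)
  simp only [id_eq, Pi.mul_def, Pi.add_def] at this
  exact this.congr_deriv (by ring)

lemma hasDerivAt_g' (τ : ℝ) :
    HasDerivAt (fun t : ℝ => (π / 4 - t / 2) * Real.cos t)
      (-(1 / 2) * Real.cos τ - (π / 4 - τ / 2) * Real.sin τ) τ := by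
  have := (((hasDerivAt_id τ).div_const 2).const_sub (π / 4)).mul (Real.hasDerivAt_cos τ)
  simp only [id_eq, Pi.mul_def, Pi.add_def] at this
  exact this.congr_deriv (by ring)

/-- Junction lemma: if `k c = 0` and `k' c = 0` then `k·H(· - c)` is differentiable at `c`
with derivative `0`. -/
lemma junction {k : ℝ → ℝ} {c : ℝ} (hk : HasDerivAt k 0 c) (hk0 : k c = 0) :
    HasDerivAt (fun τ => k τ * H (τ - c)) 0 c := by
  rw [hasDerivAt_iff_tendsto_slope] at hk ⊢
  have hn : Tendsto (fun τ => ‖slope k c τ‖) (𝓝[≠] c) (𝓝 0) := by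
    simpa using hk.norm
  refine squeeze_zero_norm (fun τ => ?_) hn
  simp only [slope_def_field, hk0, sub_self, H_nonpos (le_refl (0 : ℝ)), mul_zero, zero_mul,
    sub_zero, Real.norm_eq_abs, norm_norm, abs_abs]
  rw [abs_div, abs_div, abs_mul, div_eq_mul_inv, div_eq_mul_inv]
  refine mul_le_mul_of_nonneg_right ?_ (inv_nonneg.2 (abs_nonneg _))
  calc |k τ| * |H (τ - c)| ≤ |k τ| * 1 :=
        mul_le_mul_of_nonneg_left (H_abs _) (abs_nonneg _)
    _ = |k τ| := mul_one _

/-- Continuity across the junction. -/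
lemma cont_junction {k : ℝ → ℝ} {c : ℝ} (hk : Continuous k) (hk0 : k c = 0) :
    Continuous (fun τ => k τ * H (τ - c)) := by
  rw [continuous_iff_continuousAt]
  intro x
  rcases lt_trichotomy x c with h | h | h
  · have hev : (fun _ : ℝ => (0 : ℝ)) =ᶠ[𝓝 x] fun τ => k τ * H (τ - c) := by
      filter_upwards [Iio_mem_nhds h] with t ht
      rw [H_nonpos (by simpa using ht.le), mul_zero]
    exact continuousAt_const.congr hev
  · subst h
    have hval : (fun τ => k τ * H (τ - x)) x = 0 := by simp [hk0]
    unfold ContinuousAt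
    rw [hval]
    refine squeeze_zero_norm (fun τ => ?_) (by simpa [hk0] using (hk.tendsto x).norm)
    simp only [Real.norm_eq_abs, abs_mul]
    calc |k τ| * |H (τ - x)| ≤ |k τ| * 1 :=
          mul_le_mul_of_nonneg_left (H_abs _) (abs_nonneg _)
      _ = |k τ| := mul_one _
  · have hev : (fun τ : ℝ => k τ) =ᶠ[𝓝 x] fun τ => k τ * H (τ - c) := by
      filter_upwards [Ioi_mem_nhds h] with t ht
      rw [H_pos (by simpa using ht), mul_one]
    exact hk.continuousAt.congr hev

lemma pi2_lt_3pi2 : π / 2 < 3 * π / 2 := by nlinarith [pi_pos]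

lemma cos_3pi2 : Real.cos (3 * π / 2) = 0 := by
  have h : (3 * π / 2 : ℝ) = π + π / 2 := by ring
  simp [h, Real.cos_add]

/-- `y` is differentiable everywhere with derivative `D`. -/
lemma hasDerivAt_y (τ : ℝ) : HasDerivAt y (D τ) τ := by
  have hp := pi_pos
  rcases lt_trichotomy τ (π / 2) with h | h | h
  · -- τ < π/2 : y = b locally
    have hev : y =ᶠ[𝓝 τ] fun t : ℝ => (t / 4) * Real.sin t := by
      filter_upwards [Iio_mem_nhds h] with t ht
      simp only [Set.mem_Iio] at ht
      unfold y
      rw [H_nonpos (show t - 3 * π / 2 ≤ 0 by linarith),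
        H_nonpos (show t - π / 2 ≤ 0 by linarith)]
      ring
    have hD : D τ = (1 / 4) * Real.sin τ + (τ / 4) * Real.cos τ := by
      unfold D
      rw [H_nonpos (show τ - 3 * π / 2 ≤ 0 by linarith),
        H_nonpos (show τ - π / 2 ≤ 0 by linarith)]
      ring
    rw [hD]
    exact (hasDerivAt_b τ).congr_of_eventuallyEq hev
  · -- τ = π/2 : junction
    subst h
    have hev : y =ᶠ[𝓝 (π / 2)] fun t : ℝ => (t / 4) * Real.sin t
        + (-(1 / 2) * Real.cos t + (π / 4 - t / 2) * Real.sin t) * H (t - π / 2) := by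
      filter_upwards [Iio_mem_nhds pi2_lt_3pi2] with t ht
      simp only [Set.mem_Iio] at ht
      unfold y
      rw [H_nonpos (show t - 3 * π / 2 ≤ 0 by linarith)]
      ring
    have hg' : HasDerivAt (fun t : ℝ => -(1 / 2) * Real.cos t + (π / 4 - t / 2) * Real.sin t)
        0 (π / 2) := by
      have h0 := hasDerivAt_g (π / 2)
      rw [show (π / 4 - (π / 2) / 2 : ℝ) = 0 by ring, zero_mul] at h0
      exact h0
    have hg0 : -(1 / 2) * Real.cos (π / 2) + (π / 4 - (π / 2) / 2) * Real.sin (π / 2) = 0 := by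
      rw [Real.cos_pi_div_two, Real.sin_pi_div_two]; ring
    have hj := junction hg' hg0
    have hsum := (hasDerivAt_b (π / 2)).add hj
    have hD : D (π / 2) = (1 / 4) * Real.sin (π / 2) + ((π / 2) / 4) * Real.cos (π / 2) + 0 := by
      unfold D
      rw [H_nonpos (show (π / 2 : ℝ) - 3 * π / 2 ≤ 0 by linarith),
        H_nonpos (show (π / 2 : ℝ) - π / 2 ≤ 0 by linarith)]
      ring
    rw [hD]
    exact hsum.congr_of_eventuallyEq hev
  · rcases lt_trichotomy τ (3 * π / 2) with h2 | h2 | h2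
    · -- π/2 < τ < 3π/2 : y = b + g locally
      have hev : y =ᶠ[𝓝 τ] fun t : ℝ => (t / 4) * Real.sin t
          + (-(1 / 2) * Real.cos t + (π / 4 - t / 2) * Real.sin t) := by
        filter_upwards [Ioo_mem_nhds h h2] with t ht
        obtain ⟨ht1, ht2⟩ := ht
        unfold y
        rw [H_nonpos (show t - 3 * π / 2 ≤ 0 by linarith),
          H_pos (show (0 : ℝ) < t - π / 2 by linarith), mul_one]
        ring
      have hD : D τ = ((1 / 4) * Real.sin τ + (τ / 4) * Real.cos τ)
          + (π / 4 - τ / 2) * Real.cos τ := by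
        unfold D
        rw [H_nonpos (show τ - 3 * π / 2 ≤ 0 by linarith),
          H_pos (show (0 : ℝ) < τ - π / 2 by linarith)]
        ring
      rw [hD]
      exact ((hasDerivAt_b τ).add (hasDerivAt_g τ)).congr_of_eventuallyEq hev
    · -- τ = 3π/2 : junction
      subst h2
      have hev : y =ᶠ[𝓝 (3 * π / 2)] fun t : ℝ => ((t / 4) * Real.sin t
          + (-(1 / 2) * Real.cos t + (π / 4 - t / 2) * Real.sin t))
          + ((1 / 2) * Real.cos t + (-(3 * π / 4) + t / 2) * Real.sin t) * H (t - 3 * π / 2) := by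
        filter_upwards [Ioi_mem_nhds h] with t ht
        simp only [Set.mem_Ioi] at ht
        unfold y
        rw [H_pos (show (0 : ℝ) < t - π / 2 by linarith), mul_one]
        ring
      have hf' : HasDerivAt (fun t : ℝ => (1 / 2) * Real.cos t
          + (-(3 * π / 4) + t / 2) * Real.sin t) 0 (3 * π / 2) := by
        have h0 := hasDerivAt_f (3 * π / 2)
        rw [show (-(3 * π / 4) + (3 * π / 2) / 2 : ℝ) = 0 by ring, zero_mul] at h0
        exact h0
      have hf0 : (1 / 2) * Real.cos (3 * π / 2)
          + (-(3 * π / 4) + (3 * π / 2) / 2) * Real.sin (3 * π / 2) = 0 := by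
        rw [cos_3pi2]; ring
      have hj := junction hf' hf0
      have hsum := ((hasDerivAt_b (3 * π / 2)).add (hasDerivAt_g (3 * π / 2))).add hj
      have hD : D (3 * π / 2) = ((1 / 4) * Real.sin (3 * π / 2)
          + ((3 * π / 2) / 4) * Real.cos (3 * π / 2)
          + (π / 4 - (3 * π / 2) / 2) * Real.cos (3 * π / 2)) + 0 := by
        unfold D
        rw [H_nonpos (show (3 * π / 2 : ℝ) - 3 * π / 2 ≤ 0 by linarith),
          H_pos (show (0 : ℝ) < 3 * π / 2 - π / 2 by linarith)]
        ring
      rw [hD]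
      exact hsum.congr_of_eventuallyEq hev
    · -- τ > 3π/2
      have hev : y =ᶠ[𝓝 τ] fun t : ℝ => (t / 4) * Real.sin t
          + ((1 / 2) * Real.cos t + (-(3 * π / 4) + t / 2) * Real.sin t)
          + (-(1 / 2) * Real.cos t + (π / 4 - t / 2) * Real.sin t) := by
        filter_upwards [Ioi_mem_nhds h2] with t ht
        simp only [Set.mem_Ioi] at ht
        unfold y
        rw [H_pos (show (0 : ℝ) < t - 3 * π / 2 by linarith),
          H_pos (show (0 : ℝ) < t - π / 2 by nlinarith)]
        ring
      have hD : D τ = ((1 / 4) * Real.sin τ + (τ / 4) * Real.cos τ)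
          + (-(3 * π / 4) + τ / 2) * Real.cos τ + (π / 4 - τ / 2) * Real.cos τ := by
        unfold D
        rw [H_pos (show (0 : ℝ) < τ - 3 * π / 2 by linarith),
          H_pos (show (0 : ℝ) < τ - π / 2 by nlinarith)]
        ring
      rw [hD]
      exact (((hasDerivAt_b τ).add (hasDerivAt_f τ)).add
        (hasDerivAt_g τ)).congr_of_eventuallyEq hev

lemma deriv_y_eq : deriv y = D := funext fun τ => (hasDerivAt_y τ).deriv

lemma continuous_D : Continuous D := by
  unfold D
  refine (Continuous.add (Continuous.add (by continuity) ?_) ?_)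
  · exact cont_junction (by continuity) (by rw [cos_3pi2]; ring)
  · exact cont_junction (by continuity)
      (by rw [Real.cos_pi_div_two]; ring)

theorem stmt_9 :
    y 0 = 0 ∧ deriv y 0 = 0 ∧ ContDiffOn ℝ 1 y (Set.Icc (0 : ℝ) (2 * π)) ∧
    ∀ τ ∈ Set.Ioo (0 : ℝ) (2 * π), τ ≠ π / 2 → τ ≠ 3 * π / 2 →
      deriv (deriv y) τ + y τ
        = ((1 - H (τ - π / 2) + H (τ - 3 * π / 2)) - 1 / 2) * Real.cos τ := by
  have hp := pi_pos
  refine ⟨?_, ?_, ?_, ?_⟩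
  · unfold y
    rw [H_nonpos (show (0 : ℝ) - 3 * π / 2 ≤ 0 by linarith),
      H_nonpos (show (0 : ℝ) - π / 2 ≤ 0 by linarith)]
    simp
  · rw [deriv_y_eq]
    unfold D
    rw [H_nonpos (show (0 : ℝ) - 3 * π / 2 ≤ 0 by linarith),
      H_nonpos (show (0 : ℝ) - π / 2 ≤ 0 by linarith)]
    simp
  · refine ContDiff.contDiffOn ?_
    rw [contDiff_one_iff_deriv]
    exact ⟨fun τ => (hasDerivAt_y τ).differentiableAt, deriv_y_eq ▸ continuous_D⟩
  · intro τ hτ hne1 hne2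
    obtain ⟨hτ0, hτ2⟩ := hτ
    rw [deriv_y_eq]
    rcases lt_trichotomy τ (π / 2) with h | h | h
    · -- (0, π/2)
      have hev : D =ᶠ[𝓝 τ] fun t : ℝ => (1 / 4) * Real.sin t + (t / 4) * Real.cos t := by
        filter_upwards [Iio_mem_nhds h] with t ht
        simp only [Set.mem_Iio] at ht
        unfold D
        rw [H_nonpos (show t - 3 * π / 2 ≤ 0 by linarith),
          H_nonpos (show t - π / 2 ≤ 0 by linarith)]
        ring
      have hd : deriv D τ = (1 / 2) * Real.cos τ - (τ / 4) * Real.sin τ :=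
        ((hasDerivAt_b' τ).congr_of_eventuallyEq hev).deriv
      rw [hd]
      unfold y
      rw [H_nonpos (show τ - 3 * π / 2 ≤ 0 by linarith),
        H_nonpos (show τ - π / 2 ≤ 0 by linarith)]
      ring
    · exact absurd h hne1
    · rcases lt_trichotomy τ (3 * π / 2) with h2 | h2 | h2
      · -- (π/2, 3π/2)
        have hev : D =ᶠ[𝓝 τ] fun t : ℝ => ((1 / 4) * Real.sin t + (t / 4) * Real.cos t)
            + (π / 4 - t / 2) * Real.cos t := by
          filter_upwards [Ioo_mem_nhds h h2] with t ht
          obtain ⟨ht1, ht2⟩ := ht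
          unfold D
          rw [H_nonpos (show t - 3 * π / 2 ≤ 0 by linarith),
            H_pos (show (0 : ℝ) < t - π / 2 by linarith)]
          ring
        have hd : deriv D τ = ((1 / 2) * Real.cos τ - (τ / 4) * Real.sin τ)
            + (-(1 / 2) * Real.cos τ - (π / 4 - τ / 2) * Real.sin τ) :=
          (((hasDerivAt_b' τ).add (hasDerivAt_g' τ)).congr_of_eventuallyEq hev).deriv
        rw [hd]
        unfold y
        rw [H_nonpos (show τ - 3 * π / 2 ≤ 0 by linarith),
          H_pos (show (0 : ℝ) < τ - π / 2 by linarith)]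
        ring
      · exact absurd h2 hne2
      · -- (3π/2, 2π)
        have hev : D =ᶠ[𝓝 τ] fun t : ℝ => ((1 / 4) * Real.sin t + (t / 4) * Real.cos t)
            + (-(3 * π / 4) + t / 2) * Real.cos t + (π / 4 - t / 2) * Real.cos t := by
          filter_upwards [Ioi_mem_nhds h2] with t ht
          simp only [Set.mem_Ioi] at ht
          unfold D
          rw [H_pos (show (0 : ℝ) < t - 3 * π / 2 by linarith),
            H_pos (show (0 : ℝ) < t - π / 2 by nlinarith)]
          ring
        have hd : deriv D τ = ((1 / 2) * Real.cos τ - (τ / 4) * Real.sin τ)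
            + ((1 / 2) * Real.cos τ - (-(3 * π / 4) + τ / 2) * Real.sin τ)
            + (-(1 / 2) * Real.cos τ - (π / 4 - τ / 2) * Real.sin τ) :=
          ((((hasDerivAt_b' τ).add (hasDerivAt_f' τ)).add
            (hasDerivAt_g' τ)).congr_of_eventuallyEq hev).deriv
        rw [hd]
        unfold y
        rw [H_pos (show (0 : ℝ) < τ - 3 * π / 2 by linarith),
          H_pos (show (0 : ℝ) < τ - π / 2 by nlinarith)]
        ring
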